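/- There do not exist real polynomials a_2, a_3, ..., a_d, with a_2 of degree at most 4, together with real numbers x_1 < x_2 < 0 < z_1 < x_4 < z_2 < x_6, such that: (1) for each i \in {1,2,4,6}, the univariate polynomial Y^d + a_2(x_i) Y^{d-2} + ... + a_d(x_i) has a single real root of multiplicity d (equivalently a_2(x_i) = 0 by maximal tangency), the four points x_1, x_2, x_4, x_6 being simple roots of a_2 and the only roots of a_2; and (2) for j = 1, 2, the polynomial Y^d + a_2(z_j) Y^{d-2} + ... + a_d(z_j) has d distinct real roots. -/

import Mathlib

/-! If the fibre polynomial `Y^d + b₂ Y^(d-2) + ⋯ + b_d` splits with roots `y₁, …, y_d`, Vieta's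
formulas give `∑ yᵢ = 0` and `2 b₂ = (∑ yᵢ)² - ∑ yᵢ² = -∑ yᵢ²`. Hence `a₂` vanishes where the
fibre is a single `d`-fold root and is negative where the fibre has `d` distinct real roots.
But a polynomial of degree `≤ 4` vanishing at `x₁ < x₂ < x₄ < x₆` is
`k (X - x₁)(X - x₂)(X - x₄)(X - x₆)`, which changes sign at `x₄`, so `a₂(z₁)` and `a₂(z₂)`
cannot both be negative. -/

open Polynomial Finset

theorem Multiset.sq_sum_eq_sum_sq_add_two_mul_esymm {R : Type*} [CommRing R]
    (s : Multiset R) : s.sum ^ 2 = (s.map (· ^ 2)).sum + 2 * s.esymm 2 := by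
  induction s using Multiset.induction_on with
  | empty => simp [Multiset.esymm, Multiset.powersetCard_zero_right]
  | cons a s ih =>
    have hesymm : (a ::ₘ s).esymm 2 = s.esymm 2 + a * s.sum := by
      simp only [Multiset.esymm, Multiset.powersetCard_cons, Multiset.powersetCard_one,
        Multiset.map_add, Multiset.sum_add, Multiset.map_map]
      simpa using Multiset.sum_map_mul_left (s := s) (a := a) (f := id)
    rw [hesymm, Multiset.sum_cons, Multiset.map_cons, Multiset.sum_cons]
    linear_combination ih

namespace Polynomial

section Depressed

variable {R : Type*} [CommRing R] {d : ℕ} {b : ℕ → R}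

noncomputable def depressedPoly (d : ℕ) (b : ℕ → R) : R[X] :=
  X ^ d + ∑ i ∈ Icc 2 d, C (b i) * X ^ (d - i)

theorem coeff_depressedPoly (d : ℕ) (b : ℕ → R) {k : ℕ} (hk : k < d) :
    (depressedPoly d b).coeff k = if k + 2 ≤ d then b (d - k) else 0 := by
  rw [depressedPoly, coeff_add, coeff_X_pow, if_neg hk.ne, zero_add, finsetSum_coeff]
  simp only [coeff_C_mul, coeff_X_pow]
  split_ifs with hk2
  · rw [sum_eq_single (d - k)]
    · simp [Nat.sub_sub_self hk.le]
    · intro i hi hik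
      simp only [mem_Icc] at hi
      rw [if_neg (by omega), mul_zero]
    · intro h
      exact absurd (mem_Icc.2 ⟨by omega, by omega⟩) h
  · refine sum_eq_zero fun i hi => ?_
    simp only [mem_Icc] at hi
    rw [if_neg (by omega), mul_zero]

theorem coeff_depressedPoly_pred (hd : 0 < d) (b : ℕ → R) :
    (depressedPoly d b).coeff (d - 1) = 0 := by
  rw [coeff_depressedPoly d b (by omega), if_neg (by omega)]

theorem coeff_depressedPoly_sub_two (hd : 2 ≤ d) (b : ℕ → R) :
    (depressedPoly d b).coeff (d - 2) = b 2 := by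
  rw [coeff_depressedPoly d b (by omega), if_pos (by omega), Nat.sub_sub_self hd]

variable [Nontrivial R] {s : Multiset R}

theorem natDegree_depressedPoly (hd : 0 < d) (b : ℕ → R) :
    (depressedPoly d b).natDegree = d := by
  rw [depressedPoly, natDegree_add_eq_left_of_natDegree_lt] <;> rw [natDegree_X_pow]
  refine lt_of_le_of_lt (natDegree_sum_le_of_forall_le _ _ fun i hi => ?_) (Nat.sub_lt hd two_pos)
  exact (natDegree_C_mul_X_pow_le _ _).trans (Nat.sub_le_sub_left (mem_Icc.1 hi).1 d)

theorem card_eq_of_depressedPoly_eq_prod (hd : 0 < d)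
    (h : depressedPoly d b = (s.map (X - C ·)).prod) : Multiset.card s = d := by
  rw [← natDegree_multiset_prod_X_sub_C_eq_card, ← h, natDegree_depressedPoly hd]

theorem sum_eq_zero_of_depressedPoly_eq_prod (hd : 0 < d)
    (h : depressedPoly d b = (s.map (X - C ·)).prod) : s.sum = 0 := by
  obtain rfl := card_eq_of_depressedPoly_eq_prod hd h
  have := congr_arg (coeff · (Multiset.card s - 1)) h
  simp only [coeff_depressedPoly_pred hd, multiset_prod_X_sub_C_coeff_card_pred s hd] at this
  exact neg_eq_zero.1 this.symm

theorem two_mul_eq_neg_sum_sq_of_depressedPoly_eq_prod (hd : 2 ≤ d)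
    (h : depressedPoly d b = (s.map (X - C ·)).prod) : 2 * b 2 = -(s.map (· ^ 2)).sum := by
  have hsum := sum_eq_zero_of_depressedPoly_eq_prod (by omega) h
  obtain rfl := card_eq_of_depressedPoly_eq_prod (by omega) h
  have hb : b 2 = s.esymm 2 := by
    have := congr_arg (coeff · (Multiset.card s - 2)) h
    simp only [coeff_depressedPoly_sub_two hd, Multiset.prod_X_sub_C_coeff s (Nat.sub_le _ 2),
      Nat.sub_sub_self hd] at this
    simpa using this
  rw [hb]
  linear_combination (Multiset.sq_sum_eq_sum_sq_add_two_mul_esymm s).symm + s.sum * hsum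

end Depressed

variable {K : Type*} [Field K] {d : ℕ} {b : ℕ → K}

theorem apply_two_eq_zero_of_depressedPoly_eq_X_sub_C_pow [CharZero K] (hd : 2 ≤ d) {c : K}
    (h : depressedPoly d b = (X - C c) ^ d) : b 2 = 0 := by
  have hprod : depressedPoly d b = ((Multiset.replicate d c).map (X - C ·)).prod := by
    rw [h, Multiset.map_replicate, Multiset.prod_replicate]
  have hc : c = 0 := by
    have := sum_eq_zero_of_depressedPoly_eq_prod (by omega) hprod
    rw [Multiset.sum_replicate, nsmul_eq_mul, mul_eq_zero] at this
    exact this.resolve_left (Nat.cast_ne_zero.2 (by omega))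
  rw [← coeff_depressedPoly_sub_two hd b, h, hc, C_0, sub_zero, coeff_X_pow, if_neg (by omega)]

theorem apply_two_neg_of_depressedPoly_eq_prod [LinearOrder K] [IsStrictOrderedRing K]
    (hd : 2 ≤ d) {y : Fin d → K} (hy : Function.Injective y)
    (h : depressedPoly d b = ∏ i, (X - C (y i))) : b 2 < 0 := by
  have hprod : depressedPoly d b = ((univ.val.map y).map (X - C ·)).prod := by
    rw [h, Finset.prod_eq_multiset_prod, Multiset.map_map]
    rfl
  have hb := two_mul_eq_neg_sum_sq_of_depressedPoly_eq_prod hd hprod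
  rw [Multiset.map_map, ← Finset.sum_eq_multiset_sum] at hb
  have hpos : 0 < ∑ i, y i ^ 2 := by
    obtain ⟨i, hi⟩ : ∃ i, y i ≠ 0 := by
      by_contra! hzero
      have h01 : (⟨0, by omega⟩ : Fin d) ≠ ⟨1, by omega⟩ := by simp
      exact hy.ne h01 (by rw [hzero, hzero])
    exact sum_pos' (fun j _ => sq_nonneg (y j)) ⟨i, mem_univ i, by positivity⟩
  simp only [Function.comp_def] at hb
  linarith

theorem exists_eval_eq_mul_prod_of_natDegree_le {R : Type*} [CommRing R] [IsDomain R]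
    {p : R[X]} {n : ℕ} {x : Fin n → R} (hx : Function.Injective x)
    (hdeg : p.natDegree ≤ n) (hroot : ∀ i, p.eval (x i) = 0) :
    ∃ k : R, ∀ z, p.eval z = k * ∏ i, (z - x i) := by
  rcases eq_or_ne p 0 with rfl | hp
  · exact ⟨0, by simp⟩
  set s : Multiset R := univ.val.map x
  have hs : Multiset.card s = n := by simp [s]
  have hle : s ≤ p.roots := by
    rw [Multiset.le_iff_subset (univ.nodup.map hx)]
    intro z hz
    obtain ⟨i, -, rfl⟩ := Multiset.mem_map.1 hz
    exact (mem_roots hp).2 (hroot i)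
  have hroots : s = p.roots := Multiset.eq_of_le_of_card_le hle (hs ▸ (card_roots' p).trans hdeg)
  have hcard : Multiset.card p.roots = p.natDegree :=
    le_antisymm (card_roots' p) (hroots ▸ hs ▸ hdeg)
  refine ⟨p.leadingCoeff, fun z => ?_⟩
  conv_lhs => rw [← C_leadingCoeff_mul_prod_multiset_X_sub_C hcard, ← hroots]
  rw [eval_mul, eval_C, eval_multiset_prod, Multiset.map_map, Multiset.map_map,
    Finset.prod_eq_multiset_prod]
  simp

theorem eval_mul_eval_nonpos_of_natDegree_le_four {K : Type*} [Field K] [LinearOrder K]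
    [IsStrictOrderedRing K] {p : K[X]} (hdeg : p.natDegree ≤ 4) {x1 x2 x4 x6 z1 z2 : K}
    (h12 : x1 < x2) (h2z1 : x2 < z1) (hz1x4 : z1 < x4) (hx4z2 : x4 < z2) (hz2x6 : z2 < x6)
    (hroot : ∀ x ∈ ({x1, x2, x4, x6} : Set K), p.eval x = 0) :
    p.eval z1 * p.eval z2 ≤ 0 := by
  have hmono : StrictMono ![x1, x2, x4, x6] := Fin.strictMono_iff_lt_succ.2 <| by
    simp [Fin.forall_fin_succ, h12, h2z1.trans hz1x4, hx4z2.trans hz2x6]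
  obtain ⟨k, hk⟩ := exists_eval_eq_mul_prod_of_natDegree_le hmono.injective hdeg
    (by simp [Fin.forall_fin_succ, hroot])
  simp only [hk, Fin.prod_univ_four, Matrix.cons_val]
  have hz1 : 0 < (z1 - x1) * (z1 - x2) * (z1 - x4) * (z1 - x6) := by
    have := mul_pos (mul_pos (sub_pos.2 (h12.trans h2z1)) (sub_pos.2 h2z1))
      (mul_pos (sub_pos.2 hz1x4) (sub_pos.2 (hz1x4.trans (hx4z2.trans hz2x6))))
    linear_combination this
  have hz2 : (z2 - x1) * (z2 - x2) * (z2 - x4) * (z2 - x6) < 0 := by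
    have := mul_pos (mul_pos (mul_pos (sub_pos.2 (h12.trans (h2z1.trans (hz1x4.trans hx4z2))))
      (sub_pos.2 (h2z1.trans (hz1x4.trans hx4z2)))) (sub_pos.2 hx4z2)) (sub_pos.2 hz2x6)
    linear_combination this
  calc _ = k ^ 2 * ((z1 - x1) * (z1 - x2) * (z1 - x4) * (z1 - x6) *
        ((z2 - x1) * (z2 - x2) * (z2 - x4) * (z2 - x6))) := by ring
    _ ≤ 0 := mul_nonpos_of_nonneg_of_nonpos (sq_nonneg k) (mul_neg_of_pos_of_neg hz1 hz2).le

end Polynomial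

theorem no_algebraic_curve (d : ℕ) (hd : 3 ≤ d) :
    ¬ ∃ (a : ℕ → Polynomial ℝ) (x1 x2 x4 x6 z1 z2 : ℝ),
      (a 2).natDegree ≤ 4 ∧
      x1 < x2 ∧ x2 < 0 ∧ 0 < z1 ∧ z1 < x4 ∧ x4 < z2 ∧ z2 < x6 ∧
      (∀ x ∈ ({x1, x2, x4, x6} : Set ℝ), ∃ c : ℝ,
        (Polynomial.X ^ d +
          ∑ i ∈ Finset.Icc 2 d, Polynomial.C ((a i).eval x) * Polynomial.X ^ (d - i))
          = (Polynomial.X - Polynomial.C c) ^ d) ∧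
      (∀ z ∈ ({z1, z2} : Set ℝ), ∃ y : Fin d → ℝ, Function.Injective y ∧
        (Polynomial.X ^ d +
          ∑ i ∈ Finset.Icc 2 d, Polynomial.C ((a i).eval z) * Polynomial.X ^ (d - i))
          = ∏ i, (Polynomial.X - Polynomial.C (y i))) := by
  rintro ⟨a, x1, x2, x4, x6, z1, z2, hdeg, h12, h20, h0z1, hz1x4, hx4z2, hz2x6, htan, hsplit⟩
  have hd2 : 2 ≤ d := by omega
  have hroot (x) (hx : x ∈ ({x1, x2, x4, x6} : Set ℝ)) : (a 2).eval x = 0 := by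
    obtain ⟨c, hc⟩ := htan x hx
    exact apply_two_eq_zero_of_depressedPoly_eq_X_sub_C_pow (b := fun i => (a i).eval x) hd2 hc
  have hneg (z) (hz : z ∈ ({z1, z2} : Set ℝ)) : (a 2).eval z < 0 := by
    obtain ⟨y, hy, hyz⟩ := hsplit z hz
    exact apply_two_neg_of_depressedPoly_eq_prod (b := fun i => (a i).eval z) hd2 hy hyz
  have hsign := eval_mul_eval_nonpos_of_natDegree_le_four hdeg h12 (h20.trans h0z1) hz1x4 hx4z2
    hz2x6 hroot
  exact hsign.not_gt (mul_pos_of_neg_of_neg (hneg z1 (by simp)) (hneg z2 (by simp)))
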